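/- arXiv:1703.02346 — 2 statements merged into one kernel-verified Lean document; each statement's English description precedes it below -/
import Mathlib

section
/- Let (Q, f) be a triangulation quiver with at least three vertices. Then the following conditions are equivalent: (a) n_α = 3 for every arrow α ∈ Q₁; (b) g³ is the identity on Q₁; (c) there exists an arrow β ∈ Q₁ such that n_β = 3, n_{β̄} = 3, n_{f(β)} = 3 and n_{f(β̄)} = 3. (Lemma 6.6, equivalence of conditions (ii), (iii), (iv).) -/
/-- A triangulation quiver: a finite connected 2-regular quiver `(V, A, s, t)` together
with a permutation `f` of the arrows satisfying `s (f a) = t a` and `f ∘ f ∘ f = id`.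
The field `bar` records, for each arrow `a`, the unique arrow `ᾱ ≠ α` with the same
source (it exists and is unique by 2-regularity), together with its defining properties. -/
structure TriangulationQuiver where
  V : Type
  A : Type
  fintypeV : Fintype V
  fintypeA : Fintype A
  s : A → V
  t : A → V
  two_regular_src : ∀ v : V, Set.ncard {a : A | s a = v} = 2
  two_regular_tgt : ∀ v : V, Set.ncard {a : A | t a = v} = 2
  connected : ∀ u v : V,
    Relation.ReflTransGen (fun x y => ∃ a : A, (s a = x ∧ t a = y) ∨ (s a = y ∧ t a = x)) u v
  f : A → A
  f_cube : ∀ a : A, f (f (f a)) = a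
  s_f : ∀ a : A, s (f a) = t a
  bar : A → A
  bar_src : ∀ a : A, s (bar a) = s a
  bar_ne : ∀ a : A, bar a ≠ a
  bar_unique : ∀ a b : A, s b = s a → b ≠ a → b = bar a

attribute [instance] TriangulationQuiver.fintypeV TriangulationQuiver.fintypeA

namespace TriangulationQuiver

variable (Q : TriangulationQuiver)

/-- The second permutation of arrows: `g α = \overline{f α}`. -/
def g (a : Q.A) : Q.A := Q.bar (Q.f a)

/-- The `g`-orbit of an arrow. -/
def gOrbit (a : Q.A) : Set Q.A := {b : Q.A | ∃ k : ℕ, Q.g^[k] a = b}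

/-- `n α` is the number of arrows in the `g`-orbit of `α`. -/
noncomputable def n (a : Q.A) : ℕ := (Q.gOrbit a).ncard

end TriangulationQuiver

/-!
Both `n_α = 3` for all `α` and `g³ = id` say that every arrow is a `g`-periodic point of
period `3`, except that `g³ = id` also allows `g`-fixed arrows. A fixed arrow forces, together
with `g³ = id`, a set of four arrows closed under `f` and `¯`, and by connectedness such a set
contains all arrows, so there are at most two vertices.

For the last condition, call `α` good if `α`, `ᾱ`, `f α`, `f ᾱ` are all `g³`-fixed. The good
arrows are closed under `¯` and under `f`, because `g³ α = α` gives `f (f ᾱ) = g² α` and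
`f (g α) = g (f ᾱ)`. Hence one good arrow makes every arrow good.
-/

open Function

theorem Function.ncard_range_iterate_eq_minimalPeriod {α : Type*} {f : α → α} {x : α}
    (hx : x ∈ periodicPts f) : (Set.range (f^[·] x)).ncard = minimalPeriod f x := by
  have hrange : Set.range (f^[·] x) = (f^[·] x) '' Set.Iio (minimalPeriod f x) := by
    refine subset_antisymm ?_ (Set.image_subset_range _ _)
    rintro _ ⟨k, rfl⟩
    exact ⟨k % minimalPeriod f x, Nat.mod_lt _ (minimalPeriod_pos_of_mem_periodicPts hx),
      iterate_mod_minimalPeriod_eq⟩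
  rw [hrange, iterate_injOn_Iio_minimalPeriod.ncard_image, ← Finset.coe_Iio,
    Set.ncard_coe_finset, Nat.card_Iio]

namespace TriangulationQuiver

variable {Q : TriangulationQuiver}

theorem bar_bar (a : Q.A) : Q.bar (Q.bar a) = a :=
  (Q.bar_unique (Q.bar a) a (Q.bar_src a).symm (Q.bar_ne a).symm).symm

theorem bar_g (a : Q.A) : Q.bar (Q.g a) = Q.f a := bar_bar _

theorem f_injective : Injective Q.f :=
  LeftInverse.injective (g := Q.f ∘ Q.f) Q.f_cube

theorem g_injective : Injective Q.g :=
  (LeftInverse.injective bar_bar).comp f_injective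

theorem exists_s_eq (v : Q.V) : ∃ a, Q.s a = v :=
  Set.nonempty_of_ncard_ne_zero (s := {a | Q.s a = v}) (by rw [Q.two_regular_src v]; norm_num)

theorem n_eq_minimalPeriod (a : Q.A) : Q.n a = minimalPeriod Q.g a :=
  ncard_range_iterate_eq_minimalPeriod (g_injective.mem_periodicPts a)

theorem n_eq_three_iff (a : Q.A) :
    Q.n a = 3 ↔ IsPeriodicPt Q.g 3 a ∧ ¬IsFixedPt Q.g a := by
  rw [n_eq_minimalPeriod, minimalPeriod_eq_prime_iff]

section Closed

variable {S : Set Q.A} (hf : ∀ x ∈ S, Q.f x ∈ S) (hbar : ∀ x ∈ S, Q.bar x ∈ S)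
include hbar

theorem mem_of_s_eq {x y : Q.A} (hx : x ∈ S) (hy : Q.s y = Q.s x) : y ∈ S := by
  by_cases hyx : y = x
  · exact hyx ▸ hx
  · exact Q.bar_unique x y hy hyx ▸ hbar x hx

include hf

theorem exists_mem_s_eq_of_closed {a : Q.A} (ha : a ∈ S) (v : Q.V) : ∃ x ∈ S, Q.s x = v := by
  induction Q.connected (Q.s a) v with
  | refl => exact ⟨a, ha, rfl⟩
  | tail _ hstep ih =>
    obtain ⟨x, hx, rfl⟩ := ih
    obtain ⟨e, ⟨hse, rfl⟩ | ⟨rfl, hte⟩⟩ := hstep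
    · exact ⟨Q.f e, hf e (mem_of_s_eq hbar hx hse), Q.s_f e⟩
    · have hfe : Q.f e ∈ S := mem_of_s_eq hbar hx (by rw [Q.s_f, hte])
      exact ⟨e, Q.f_cube e ▸ hf _ (hf _ hfe), rfl⟩

theorem eq_univ_of_closed (hS : S.Nonempty) : S = Set.univ := by
  obtain ⟨a, ha⟩ := hS
  refine Set.eq_univ_of_forall fun y => ?_
  obtain ⟨x, hx, hsx⟩ := exists_mem_s_eq_of_closed hf hbar ha (Q.s y)
  exact mem_of_s_eq hbar hx hsx.symm

end Closed

theorem card_V_le_two_of_isFixedPt (hg : ∀ x, IsPeriodicPt Q.g 3 x) {a : Q.A}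
    (ha : IsFixedPt Q.g a) : Fintype.card Q.V ≤ 2 := by
  classical
  have hfa : Q.f a = Q.bar a := by rw [← bar_g, ha.eq]
  set c := Q.f (Q.bar a) with hc
  have hfc : Q.f c = a := by rw [hc, ← hfa, Q.f_cube]
  -- `g ā = c̄`, so `f (g c̄) = bar (g³ ā) = a` and hence `g c̄ = f (f a) = c`
  have hgc : Q.g (Q.bar c) = c := by
    have hf_g : Q.f (Q.g (Q.bar c)) = a := by
      rw [← bar_g, show Q.g (Q.g (Q.bar c)) = Q.bar a from hg (Q.bar a), bar_bar]
    rw [← Q.f_cube (Q.g (Q.bar c)), hf_g, hfa]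
  have hfc' : Q.f (Q.bar c) = Q.bar c := by rw [← bar_g, hgc]
  let S : Set Q.A := {a, Q.bar a, c, Q.bar c}
  have hS_f : ∀ x ∈ S, Q.f x ∈ S := by
    rintro x (rfl | rfl | rfl | rfl) <;> simp [S, hfa, hfc, hfc', ← hc]
  have hS_bar : ∀ x ∈ S, Q.bar x ∈ S := by
    rintro x (rfl | rfl | rfl | rfl) <;> simp [S, bar_bar]
  have hV : (Finset.univ : Finset Q.V) ⊆ {Q.s a, Q.s c} := by
    intro v _
    obtain ⟨x, hx, rfl⟩ := exists_mem_s_eq_of_closed hS_f hS_bar (Set.mem_insert a _) v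
    rcases hx with rfl | rfl | rfl | rfl <;> simp [Q.bar_src]
  exact (Finset.card_le_card hV).trans Finset.card_le_two

theorem n_eq_three_of_forall_isPeriodicPt (h3 : 3 ≤ Fintype.card Q.V)
    (hg : ∀ x, IsPeriodicPt Q.g 3 x) (a : Q.A) : Q.n a = 3 :=
  (n_eq_three_iff a).2 ⟨hg a, fun ha => by have := card_V_le_two_of_isFixedPt hg ha; omega⟩

section PeriodThree

variable {x : Q.A} (hx : IsPeriodicPt Q.g 3 x)
include hx

theorem f_f_bar_eq : Q.f (Q.f (Q.bar x)) = Q.g (Q.g x) :=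
  g_injective (by rw [g, Q.f_cube, bar_bar]; exact hx.symm)

theorem f_g_eq : Q.f (Q.g x) = Q.g (Q.f (Q.bar x)) := by
  rw [← bar_g, ← f_f_bar_eq hx]; rfl

end PeriodThree

def IsGood (Q : TriangulationQuiver) (a : Q.A) : Prop :=
  IsPeriodicPt Q.g 3 a ∧ IsPeriodicPt Q.g 3 (Q.bar a) ∧ IsPeriodicPt Q.g 3 (Q.f a) ∧
    IsPeriodicPt Q.g 3 (Q.f (Q.bar a))

theorem IsGood.bar {a : Q.A} (ha : Q.IsGood a) : Q.IsGood (Q.bar a) := by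
  obtain ⟨h, hbar, hf, hfbar⟩ := ha
  exact ⟨hbar, (bar_bar a).symm ▸ h, hfbar, (bar_bar a).symm ▸ hf⟩

theorem IsGood.f {a : Q.A} (ha : Q.IsGood a) : Q.IsGood (Q.f a) := by
  obtain ⟨h, hbar, hf, hfbar⟩ := ha
  have hff : Q.f (Q.f a) = Q.g (Q.g (Q.bar a)) := by
    simpa only [bar_bar] using f_f_bar_eq hbar
  refine ⟨hf, h.apply, hff ▸ hbar.apply.apply, ?_⟩
  show IsPeriodicPt Q.g 3 (Q.f (Q.g a))
  exact f_g_eq h ▸ hfbar.apply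

theorem isPeriodicPt_three_of_isGood {b : Q.A} (hb : Q.IsGood b) (a : Q.A) :
    IsPeriodicPt Q.g 3 a := by
  have hgood := eq_univ_of_closed (S := {x | Q.IsGood x}) (fun _ => IsGood.f)
    (fun _ => IsGood.bar) ⟨b, hb⟩
  exact (Set.eq_univ_iff_forall.1 hgood a).1

end TriangulationQuiver

/-- Lemma 6.6 (equivalence of (ii), (iii), (iv)): for a triangulation quiver with at
least three vertices, the following are equivalent: every arrow has `n_α = 3`;
`g³` is the identity on the arrows; there is an arrow `β` with
`n_β = n_{β̄} = n_{f(β)} = n_{f(β̄)} = 3`. -/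
theorem stmt_0 (Q : TriangulationQuiver) (h3 : 3 ≤ Fintype.card Q.V) :
    List.TFAE [
      (∀ a : Q.A, Q.n a = 3),
      (∀ a : Q.A, Q.g (Q.g (Q.g a)) = a),
      (∃ b : Q.A, Q.n b = 3 ∧ Q.n (Q.bar b) = 3 ∧ Q.n (Q.f b) = 3 ∧ Q.n (Q.f (Q.bar b)) = 3)
    ] := by
  have hperiod (a : Q.A) (h : Q.n a = 3) : IsPeriodicPt Q.g 3 a :=
    ((TriangulationQuiver.n_eq_three_iff a).1 h).1
  tfae_have 1 → 2 := fun h a => hperiod a (h a)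
  tfae_have 2 → 1 := TriangulationQuiver.n_eq_three_of_forall_isPeriodicPt h3
  tfae_have 1 → 3 := fun h => by
    obtain ⟨v⟩ : Nonempty Q.V := Fintype.card_pos_iff.1 (by omega)
    obtain ⟨b, -⟩ := TriangulationQuiver.exists_s_eq v
    exact ⟨b, h _, h _, h _, h _⟩
  tfae_have 3 → 2 := fun ⟨b, hb, hbar, hf, hfbar⟩ =>
    TriangulationQuiver.isPeriodicPt_three_of_isGood
      ⟨hperiod _ hb, hperiod _ hbar, hperiod _ hf, hperiod _ hfbar⟩
  tfae_finish
end

section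
/- Let (Q, f) be a triangulation quiver with at least three vertices such that exactly one f-orbit of arrows has three elements (equivalently, there is exactly one f-orbit of length 3 and every arrow outside it is fixed by f). Then Q has exactly three vertices and six arrows: there are three pairwise distinct vertices a, b, c with Q₀ = {a, b, c}, the f-orbit of length 3 consists of three arrows a → b, b → c, c → a, and the remaining three arrows are loops at a, b and c, each fixed by f. (Base case in the proof of Theorem 4.11: a triangulation quiver with n(Q,f) = 1 is the triangulation quiver of Example 4.3.) -/
namespace TriangulationQuiver

variable (Q : TriangulationQuiver)

/-- The `f`-orbit of an arrow. -/
def fOrbit (a : Q.A) : Set Q.A := {b : Q.A | ∃ k : ℕ, Q.f^[k] a = b}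

end TriangulationQuiver


/-!
Let `x` span the unique `f`-orbit of length three. Every arrow outside it is fixed by `f`,
and `s (f α) = t α` makes a fixed arrow a loop. Loops do not leave a vertex and the orbit
arrows only join `s x`, `s (f x)`, `s (f (f x))`, so by connectedness these are all the
vertices; having at least three vertices, they are distinct. So the second arrow `bar u`
leaving the source of an orbit arrow `u` is not in the orbit, hence a loop, and counting arrows
by source gives `2 * 3` of them.
-/

lemma Fintype.card_eq_three_and_pairwise_ne_of_forall_eq {α : Type*} [Fintype α] {a b c : α}
    (hcard : 3 ≤ Fintype.card α) (hcover : ∀ v, v = a ∨ v = b ∨ v = c) :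
    Fintype.card α = 3 ∧ a ≠ b ∧ a ≠ c ∧ b ≠ c := by
  classical
  have huniv : Finset.univ = ({a, b, c} : Finset α) :=
    Finset.eq_univ_of_forall (fun v => by simpa using hcover v) |>.symm
  have hcard_le : ∀ u v : α, ({u, v} : Finset α) = Finset.univ → False := fun u v h => by
    have := h ▸ Finset.card_le_two (a := u) (b := v)
    rw [Finset.card_univ] at this
    omega
  have hle : Fintype.card α ≤ 3 := by
    rw [← Finset.card_univ, huniv]
    exact Finset.card_le_three
  refine ⟨le_antisymm hle hcard, fun h => hcard_le a c ?_, fun h => hcard_le a b ?_,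
    fun h => hcard_le a b ?_⟩ <;>
    rw [huniv, h] <;> ext <;> simp [or_comm]

namespace TriangulationQuiver

variable (Q : TriangulationQuiver)

lemma f_injective_s11 : Function.Injective Q.f := fun a b h => by
  simpa only [Function.comp_apply, Q.f_cube] using congrArg (Q.f ∘ Q.f) h

lemma fOrbit_eq (a : Q.A) : Q.fOrbit a = {a, Q.f a, Q.f (Q.f a)} := by
  ext b
  constructor
  · rintro ⟨k, rfl⟩
    induction k with
    | zero => exact Or.inl rfl
    | succ k ih =>
      rw [Function.iterate_succ_apply']
      rcases ih with h | h | h <;> rw [h] <;> simp [Q.f_cube]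
  · rintro (rfl | rfl | rfl)
    exacts [⟨0, rfl⟩, ⟨1, rfl⟩, ⟨2, rfl⟩]

lemma fOrbit_ncard_eq_three {a : Q.A} (h : Q.f a ≠ a) : (Q.fOrbit a).ncard = 3 := by
  rw [Q.fOrbit_eq, Set.ncard_eq_three]
  refine ⟨a, Q.f a, Q.f (Q.f a), h.symm, fun h' => h ?_, fun h' => h (Q.f_injective_s11 h').symm, rfl⟩
  simpa only [← h'] using Q.f_cube a

lemma t_eq_s_of_f_eq {a : Q.A} (h : Q.f a = a) : Q.t a = Q.s a := by
  rw [← Q.s_f, h]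

lemma eq_or_eq_bar_of_s_eq {a b : Q.A} (h : Q.s b = Q.s a) : b = a ∨ b = Q.bar a := by
  by_cases hb : b = a
  · exact Or.inl hb
  · exact Or.inr (Q.bar_unique a b h hb)

lemma card_A_eq_two_mul_card_V : Fintype.card Q.A = 2 * Fintype.card Q.V := by
  classical
  rw [← Finset.card_univ, Finset.card_eq_sum_card_fiberwise (f := Q.s) (t := Finset.univ)
    (fun _ _ => Finset.mem_coe.2 (Finset.mem_univ _))]
  have hfiber : ∀ v, (Finset.univ.filter fun a => Q.s a = v).card = 2 := fun v => by
    rw [← Q.two_regular_src v, Set.ncard_eq_toFinset_card', Set.toFinset_ofPred]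
  simp only [hfiber, Finset.sum_const, Finset.card_univ, smul_eq_mul, mul_comm]

lemma forall_mem_of_arrow_closed {S : Set Q.V} (hS : ∀ a, Q.s a ∈ S ↔ Q.t a ∈ S)
    {u : Q.V} (hu : u ∈ S) (v : Q.V) : v ∈ S := by
  induction Q.connected u v with
  | refl => exact hu
  | tail _ hstep ih =>
    obtain ⟨a, ⟨rfl, rfl⟩ | ⟨rfl, rfl⟩⟩ := hstep
    exacts [(hS a).1 ih, (hS a).2 ih]

lemma forall_eq_or_eq_bar_of_forall_eq_s {x y z : Q.A}
    (hcover : ∀ v, v = Q.s x ∨ v = Q.s y ∨ v = Q.s z) (w : Q.A) :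
    w = x ∨ w = y ∨ w = z ∨ w = Q.bar x ∨ w = Q.bar y ∨ w = Q.bar z := by
  rcases hcover (Q.s w) with h | h | h <;> rcases Q.eq_or_eq_bar_of_s_eq h with h' | h' <;>
    simp only [h', true_or, or_true]

section FixedOutsideOrbit

variable {Q} {x : Q.A} (hfix : ∀ w ∉ Q.fOrbit x, Q.f w = w)
include hfix

lemma forall_eq_s_of_fixed_outside_fOrbit (v : Q.V) :
    v = Q.s x ∨ v = Q.s (Q.f x) ∨ v = Q.s (Q.f (Q.f x)) := by
  refine Q.forall_mem_of_arrow_closed (S := {Q.s x, Q.s (Q.f x), Q.s (Q.f (Q.f x))})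
    (fun a => ?_) (Set.mem_insert _ _) v
  by_cases ha : a ∈ Q.fOrbit x
  · rw [Q.fOrbit_eq] at ha
    rcases ha with rfl | rfl | rfl <;> simp [← Q.s_f, Q.f_cube]
  · rw [Q.t_eq_s_of_f_eq (hfix a ha)]

lemma f_bar_eq_of_injOn_fOrbit (hinj : Set.InjOn Q.s (Q.fOrbit x)) {u : Q.A}
    (hu : u ∈ Q.fOrbit x) : Q.f (Q.bar u) = Q.bar u :=
  hfix _ fun hbar => Q.bar_ne u (hinj hbar hu (Q.bar_src u))

end FixedOutsideOrbit

end TriangulationQuiver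

/-- Base case in the proof of Theorem 4.11: a triangulation quiver with at least three
vertices having exactly one `f`-orbit with three elements has exactly three vertices
`a, b, c` and six arrows: the `f`-orbit of length 3 consists of three arrows `a → b`,
`b → c`, `c → a` cyclically permuted by `f`, and the remaining three arrows are loops at
`a`, `b` and `c`, each fixed by `f`. -/
theorem stmt_11 (Q : TriangulationQuiver) (h3 : 3 ≤ Fintype.card Q.V)
    (huniq : ∃ a : Q.A, (Q.fOrbit a).ncard = 3 ∧
      ∀ b : Q.A, (Q.fOrbit b).ncard = 3 → Q.fOrbit b = Q.fOrbit a) :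
    Fintype.card Q.V = 3 ∧ Fintype.card Q.A = 6 ∧
    ∃ (a b c : Q.V), a ≠ b ∧ a ≠ c ∧ b ≠ c ∧ (∀ v : Q.V, v = a ∨ v = b ∨ v = c) ∧
      ∃ (x y z la lb lc : Q.A),
        Q.s x = a ∧ Q.t x = b ∧ Q.s y = b ∧ Q.t y = c ∧ Q.s z = c ∧ Q.t z = a ∧
        Q.f x = y ∧ Q.f y = z ∧ Q.f z = x ∧
        Q.s la = a ∧ Q.t la = a ∧ Q.f la = la ∧
        Q.s lb = b ∧ Q.t lb = b ∧ Q.f lb = lb ∧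
        Q.s lc = c ∧ Q.t lc = c ∧ Q.f lc = lc ∧
        (∀ w : Q.A, w = x ∨ w = y ∨ w = z ∨ w = la ∨ w = lb ∨ w = lc) := by
  obtain ⟨x, -, hxuniq⟩ := huniq
  have hfix : ∀ w ∉ Q.fOrbit x, Q.f w = w := fun w hw => by
    by_contra hne
    exact hw (hxuniq w (Q.fOrbit_ncard_eq_three hne) ▸ ⟨0, rfl⟩)
  have hcover := Q.forall_eq_s_of_fixed_outside_fOrbit hfix
  obtain ⟨hV, hab, hac, hbc⟩ := Fintype.card_eq_three_and_pairwise_ne_of_forall_eq h3 hcover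
  have hinj : Set.InjOn Q.s (Q.fOrbit x) := by
    rw [Q.fOrbit_eq]
    rintro u (rfl | rfl | rfl) v (rfl | rfl | rfl) h <;>
      first | rfl | exact absurd h ‹_› | exact absurd h.symm ‹_›
  have hloop : ∀ u ∈ Q.fOrbit x, Q.s (Q.bar u) = Q.s u ∧ Q.t (Q.bar u) = Q.s u ∧
      Q.f (Q.bar u) = Q.bar u := fun u hu =>
    have hf := Q.f_bar_eq_of_injOn_fOrbit hfix hinj hu
    ⟨Q.bar_src u, (Q.t_eq_s_of_f_eq hf).trans (Q.bar_src u), hf⟩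
  obtain ⟨hsa, hta, hfa⟩ := hloop x ⟨0, rfl⟩
  obtain ⟨hsb, htb, hfb⟩ := hloop (Q.f x) ⟨1, rfl⟩
  obtain ⟨hsc, htc, hfc⟩ := hloop (Q.f (Q.f x)) ⟨2, rfl⟩
  refine ⟨hV, by rw [Q.card_A_eq_two_mul_card_V, hV], _, _, _, hab, hac, hbc, hcover,
    x, Q.f x, Q.f (Q.f x), Q.bar x, Q.bar (Q.f x), Q.bar (Q.f (Q.f x)),
    rfl, (Q.s_f x).symm, rfl, (Q.s_f _).symm, rfl, by rw [← Q.s_f, Q.f_cube], rfl, rfl,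
    Q.f_cube x, hsa, hta, hfa, hsb, htb, hfb, hsc, htc, hfc,
    Q.forall_eq_or_eq_bar_of_forall_eq_s hcover⟩
end
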